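/- arXiv:2303.00837 — 2 statements merged into one kernel-verified Lean document; each statement's English description precedes it below -/
import Mathlib

section
/- Let f be a flow on a network G satisfying capacity constraints but not flow conservation, and let u be a node (other than source and sink) with positive excess. Then there exists a node v with positive deficit (possibly the source s) such that there is a path from u to v in the residual graph G_f all of whose edges have positive residual capacity. -/
open Finset

noncomputable def inflow {V : Type*} [Fintype V] (f : V → V → ℝ) (u : V) : ℝ := ∑ v, f v u
noncomputable def outflow {V : Type*} [Fintype V] (f : V → V → ℝ) (u : V) : ℝ := ∑ v, f u v
noncomputable def excess {V : Type*} [Fintype V] (f : V → V → ℝ) (u : V) : ℝ :=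
  max (inflow f u - outflow f u) 0
noncomputable def deficit {V : Type*} [Fintype V] (f : V → V → ℝ) (u : V) : ℝ :=
  max (outflow f u - inflow f u) 0
/-- Residual capacity of the arc `(a,b)` in the residual graph `G_f`. -/
noncomputable def res {V : Type*} (f c : V → V → ℝ) (a b : V) : ℝ := (c a b - f a b) + f b a

/-- If `u` (other than the source and sink) has positive excess, then there is a node
`v` with positive deficit (possibly the source `s`) reachable from `u` by a path of
positive-residual-capacity edges in the residual graph. -/
theorem stmt_1 {V : Type*} [Fintype V] [DecidableEq V] (s t : V) (f c : V → V → ℝ)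
    (hcap : ∀ a b, 0 ≤ f a b ∧ f a b ≤ c a b) (u : V) (hus : u ≠ s) (hut : u ≠ t)
    (hex : 0 < excess f u) :
    ∃ v : V, (v = s ∨ 0 < deficit f v) ∧
      Relation.ReflTransGen (fun a b => 0 < res f c a b) u v := by
  classical
  by_contra h
  push_neg at h
  set R : V → V → Prop := fun a b => 0 < res f c a b with hR
  set S : Finset V := univ.filter (fun v => Relation.ReflTransGen R u v) with hS
  have huS : u ∈ S := by
    simp only [hS, Finset.mem_filter, Finset.mem_univ, true_and]
    exact Relation.ReflTransGen.refl
  -- no flow enters S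
  have hnoin : ∀ v ∈ S, ∀ a ∈ Sᶜ, f a v = 0 := by
    intro v hv a ha
    have hvS : Relation.ReflTransGen R u v := by simpa [hS] using hv
    have haS : ¬ Relation.ReflTransGen R u a := by
      simpa [hS] using (Finset.mem_compl.mp ha)
    have hres : ¬ (0 < res f c v a) := fun hpos => haS (hvS.tail hpos)
    have h1 := (hcap v a).1
    have h2 := (hcap v a).2
    have h3 := (hcap a v).1
    have := not_lt.mp hres
    unfold res at this
    linarith
  -- deficits are zero on S
  have hdef : ∀ v ∈ S, inflow f v - outflow f v ≥ 0 := by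
    intro v hv
    have hvS : Relation.ReflTransGen R u v := by simpa [hS] using hv
    have := h v
    rcases (not_or.mp (fun hor => (h v hor) hvS)) with ⟨_, hd⟩
    have : deficit f v ≤ 0 := le_of_not_gt hd
    have hle : outflow f v - inflow f v ≤ deficit f v := le_max_left _ _
    linarith
  have hexu : 0 < inflow f u - outflow f u := by
    unfold excess at hex
    by_contra hle
    push_neg at hle
    rw [max_eq_right hle] at hex
    exact lt_irrefl _ hex
  -- sum over S
  have hsumpos : 0 < ∑ v ∈ S, (inflow f v - outflow f v) :=
    Finset.sum_pos' (fun v hv => hdef v hv) ⟨u, huS, hexu⟩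
  have key : ∑ v ∈ S, (inflow f v - outflow f v)
      = ∑ v ∈ S, ∑ a ∈ Sᶜ, f a v - ∑ v ∈ S, ∑ b ∈ Sᶜ, f v b := by
    have h1 : ∀ v, inflow f v = ∑ a ∈ S, f a v + ∑ a ∈ Sᶜ, f a v := fun v =>
      (Finset.sum_add_sum_compl S _).symm
    have h2 : ∀ v, outflow f v = ∑ b ∈ S, f v b + ∑ b ∈ Sᶜ, f v b := fun v =>
      (Finset.sum_add_sum_compl S _).symm
    have hswap : ∑ v ∈ S, ∑ a ∈ S, f a v = ∑ v ∈ S, ∑ a ∈ S, f v a :=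
      Finset.sum_comm
    simp only [h1, h2, Finset.sum_sub_distrib, Finset.sum_add_distrib]
    linarith
  have hz : ∑ v ∈ S, ∑ a ∈ Sᶜ, f a v = 0 :=
    Finset.sum_eq_zero fun v hv => Finset.sum_eq_zero fun a ha => hnoin v hv a ha
  have hnn : 0 ≤ ∑ v ∈ S, ∑ b ∈ Sᶜ, f v b :=
    Finset.sum_nonneg fun v _ => Finset.sum_nonneg fun b _ => (hcap v b).1
  rw [key, hz] at hsumpos
  linarith
end

section
/- Suppose augmenting along path p₁ in the residual graph G_f (sending positive flow, producing flow h) creates a positive-capacity path p₂ in G_h between two nodes u₂ and v that had no positive-capacity path between them in G_f. Then p₂ shares at least one edge that is the reverse of an edge of p₁, and concatenating the prefix of p₁ up to the tail of the last such reversed edge with the corresponding suffix of p₂ yields a positive-capacity path in G_f from the start of p₁ to v. -/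
open Finset

def steps {V : Type*} (l : List V) : List (V × V) := l.zip l.tail

noncomputable def sendPath {V : Type*} [DecidableEq V] (f : V → V → ℝ) (l : List V) (μ : ℝ) :
    V → V → ℝ :=
  fun a b => f a b + μ * ((steps l).count (a, b)) - μ * ((steps l).count (b, a))

lemma reach_of_mem_steps {V : Type*} {R : V → V → Prop} :
    ∀ (l : List V) (u a b : V), l.Chain' R → l.head? = some u → (b, a) ∈ steps l →
      Relation.ReflTransGen R u b
  | [], _, _, _, _, _, hmem => by simp [steps] at hmem
  | [x], _, _, _, _, _, hmem => by simp [steps] at hmem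
  | x :: y :: rest, u, a, b, hch, hhd, hmem => by
    have hux : u = x := by simpa using hhd.symm
    subst hux
    have hxy : R u y := (List.isChain_cons_cons.mp hch).1
    have hch' := (List.isChain_cons_cons.mp hch).2
    simp only [steps, List.zip_cons_cons] at hmem
    cases hmem with
    | head => exact Relation.ReflTransGen.refl
    | tail _ hmem =>
      have := reach_of_mem_steps (y :: rest) y a b hch' rfl hmem
      exact (Relation.ReflTransGen.single hxy).trans this

/-- Suppose augmenting `μ > 0` units along a positive-residual-capacity path `p₁`
in `G_f` produces the flow `h`, and this creates a positive-capacity path `p₂` in `G_h` from `u₂`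
to `v`, where no positive-capacity path from `u₂` to `v` existed in `G_f`. Then some edge of `p₂`
is the reverse of an edge of `p₁`, and (splicing a prefix of `p₁` with a suffix of `p₂`) there is
a positive-capacity path in `G_f` from the start of `p₁` to `v`. -/
theorem stmt_17 {V : Type*} [Fintype V] [DecidableEq V] (f c : V → V → ℝ)
    (hcap : ∀ a b, 0 ≤ f a b ∧ f a b ≤ c a b)
    (p₁ : List V) (u₁ : V) (hp₁ : p₁.head? = some u₁)
    (hchain₁ : p₁.Chain' (fun a b => 0 < res f c a b))
    (μ : ℝ) (hμ : 0 < μ) (h : V → V → ℝ) (hh : h = sendPath f p₁ μ)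
    (hhcap : ∀ a b, 0 ≤ h a b ∧ h a b ≤ c a b)
    (p₂ : List V) (u₂ v : V) (hp₂h : p₂.head? = some u₂) (hp₂l : p₂.getLast? = some v)
    (hchain₂ : p₂.Chain' (fun a b => 0 < res h c a b))
    (hnew : ¬ Relation.ReflTransGen (fun a b => 0 < res f c a b) u₂ v) :
    (∃ a b : V, (a, b) ∈ steps p₂ ∧ (b, a) ∈ steps p₁) ∧
      Relation.ReflTransGen (fun a b => 0 < res f c a b) u₁ v := by
  set Rf := fun a b => 0 < res f c a b with hRf
  set Rh := fun a b => 0 < res h c a b with hRh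
  -- key pointwise lemma
  have key : ∀ a b : V, Rh a b → ¬ Rf a b → (b, a) ∈ steps p₁ := by
    intro a b hab hnab
    have h1 : res h c a b = res f c a b
        + 2 * μ * (((steps p₁).count (b, a) : ℝ) - ((steps p₁).count (a, b) : ℝ)) := by
      simp only [res, hh, sendPath]; ring
    have hle : res f c a b ≤ 0 := not_lt.mp hnab
    have hcnt : ((steps p₁).count (a, b) : ℝ) < ((steps p₁).count (b, a) : ℝ) := by
      by_contra hc
      push_neg at hc
      have : res h c a b ≤ 0 := by nlinarith [hab]
      exact absurd hab (not_lt.mpr this)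
    have : (steps p₁).count (a, b) < (steps p₁).count (b, a) := by exact_mod_cast hcnt
    exact List.count_pos_iff.mp (Nat.lt_of_le_of_lt (Nat.zero_le _) this)
  -- main induction along p₂
  have main : ∀ (l : List V) (a : V), l.Chain' Rh → l.head? = some a → l.getLast? = some v →
      Relation.ReflTransGen Rf a v ∨
        ((∃ x y : V, (x, y) ∈ steps l ∧ (y, x) ∈ steps p₁) ∧
          Relation.ReflTransGen Rf u₁ v) := by
    intro l
    induction l with
    | nil => intro a _ hhd _; simp at hhd
    | cons x t ih =>
      intro a hch hhd hlast
      have hax : a = x := by simpa using hhd.symm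
      subst hax
      cases t with
      | nil =>
        have hav : a = v := by simpa using hlast
        subst hav
        exact Or.inl Relation.ReflTransGen.refl
      | cons y rest =>
        have hxy : Rh a y := (List.isChain_cons_cons.mp hch).1
        have hch' := (List.isChain_cons_cons.mp hch).2
        have hlast' : (y :: rest).getLast? = some v := by
          rw [List.getLast?_cons_cons] at hlast; exact hlast
        rcases ih y hch' rfl hlast' with hyv | ⟨⟨x', y', hmem, hmem'⟩, hreach⟩
        · by_cases hfxy : Rf a y
          · exact Or.inl ((Relation.ReflTransGen.single hfxy).trans hyv)
          · have hrev : (y, a) ∈ steps p₁ := key a y hxy hfxy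
            have hu₁y : Relation.ReflTransGen Rf u₁ y :=
              reach_of_mem_steps p₁ u₁ a y hchain₁ hp₁ hrev
            refine Or.inr ⟨⟨a, y, ?_, hrev⟩, hu₁y.trans hyv⟩
            simp [steps]
        · refine Or.inr ⟨⟨x', y', ?_, hmem'⟩, hreach⟩
          simp only [steps, List.zip_cons_cons, List.mem_cons]
          right
          exact hmem
  rcases main p₂ u₂ hchain₂ hp₂h hp₂l with hcontra | ⟨⟨x, y, h1, h2⟩, hr⟩
  · exact absurd hcontra hnew
  · exact ⟨⟨x, y, h1, h2⟩, hr⟩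
end
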